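/- Let C be an f-cell and T_C its associated tree with marked and unmarked internal vertices, leaves in bijection with a variable set X. Let R[C] be the quotient of the free associative ring ℤ⟨X⟩ by the ideal generated by monomials that either contain a repeated variable or contain two variables whose first common ancestor in T_C is unmarked. Then the subset 1 + R̃(C), where R̃(C) is the span of 'maximal' monomials (those obtained by reading off planar embeddings of full subtrees from the root), is closed under multiplication, and multiplication is given by (1 + ∑_I α_I X_I)(1 + ∑_I β_I X_I) = 1 + ∑_I (α_I + β_I) X_I; in particular 1 + R̃(C) is an abelian group isomorphic to (R̃(C), +). -/

import Mathlib

/-- The monomial indexed by a list of variables, in the free associative ℤ-algebra. -/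
def ncMonomial {X : Type*} (l : List X) : FreeAlgebra ℤ X :=
  (l.map (FreeAlgebra.ι ℤ)).prod

/-- The defining relation for `R[C]`: a monomial is identified with `0` if it has a
repeated variable, or if it contains two distinct variables `u, v` whose first common
ancestor in the tree `T_C` is unmarked (the latter condition is encoded abstractly by the
symmetric relation `P` on variables/leaves). -/
def cellRel {X : Type*} (P : X → X → Prop) :
    FreeAlgebra ℤ X → FreeAlgebra ℤ X → Prop :=
  fun a b =>
    (∃ l : List X, (¬ l.Nodup ∨ ∃ u ∈ l, ∃ v ∈ l, u ≠ v ∧ P u v) ∧ a = ncMonomial l) ∧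
    b = 0

/-- A monomial of `R[C]` is maximal if inserting any variable anywhere into it yields `0`
in `R[C]`. -/
def IsMaximalMonomial {X : Type*} (P : X → X → Prop) (l : List X) : Prop :=
  ∀ (x : X) (l₁ l₂ : List X), l = l₁ ++ l₂ →
    RingQuot.mkRingHom (cellRel P) (ncMonomial (l₁ ++ x :: l₂)) = 0

/-- `R̃(C)`: the additive span of the (images of the) maximal monomials in `R[C]`. -/
def Rtilde {X : Type*} (P : X → X → Prop) : Submodule ℤ (RingQuot (cellRel P)) :=
  Submodule.span ℤ
    {r : RingQuot (cellRel P) |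
      ∃ l : List X, IsMaximalMonomial P l ∧ r = RingQuot.mkRingHom (cellRel P) (ncMonomial l)}


section Aux
variable {X : Type*} (P : X → X → Prop)

lemma ncMonomial_append (l₁ l₂ : List X) :
    ncMonomial (l₁ ++ l₂) = ncMonomial l₁ * ncMonomial l₂ := by
  simp [ncMonomial]

noncomputable def Ftest : FreeAlgebra ℤ X →+* DualNumber ℤ :=
  (FreeAlgebra.lift ℤ (fun _ : X => (DualNumber.eps : DualNumber ℤ))).toRingHom

lemma Ftest_mon (l : List X) : Ftest (ncMonomial l) = DualNumber.eps ^ l.length := by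
  unfold ncMonomial
  rw [map_list_prod]
  simp [Ftest, List.map_map, Function.comp_def, List.map_const', List.prod_replicate]

lemma bad_length {l : List X}
    (h : ¬ l.Nodup ∨ ∃ u ∈ l, ∃ v ∈ l, u ≠ v ∧ P u v) : 2 ≤ l.length := by
  by_contra hlen
  push_neg at hlen
  interval_cases h' : l.length
  · rw [List.length_eq_zero_iff] at h'
    subst h'
    rcases h with h | ⟨u, hu, _⟩
    · exact h List.nodup_nil
    · exact absurd hu (List.not_mem_nil (a := u))
  · rw [List.length_eq_one_iff] at h'
    obtain ⟨a, rfl⟩ := h'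
    rcases h with h | ⟨u, hu, v, hv, huv, _⟩
    · exact h (List.nodup_singleton a)
    · simp only [List.mem_singleton] at hu hv
      exact huv (hu.trans hv.symm)

lemma Ftest_resp : ∀ ⦃a b : FreeAlgebra ℤ X⦄, cellRel P a b → Ftest a = Ftest b := by
  rintro a b ⟨⟨l, hbad, rfl⟩, rfl⟩
  rw [Ftest_mon, map_zero]
  obtain ⟨n, hn⟩ := Nat.exists_eq_add_of_le (bad_length P hbad)
  rw [hn, pow_add, pow_two, DualNumber.eps_mul_eps, zero_mul]

/-- The empty monomial is never maximal. -/
lemma not_maximal_nil [Nonempty X] : ¬ IsMaximalMonomial P [] := by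
  intro h
  obtain ⟨x⟩ := ‹Nonempty X›
  have h0 := h x [] [] rfl
  have := congrArg (RingQuot.lift ⟨Ftest, Ftest_resp P⟩) h0
  rw [RingQuot.lift_mkRingHom_apply, map_zero, Ftest_mon] at this
  have heps : (DualNumber.eps : DualNumber ℤ) = 0 := by simpa using this
  have h1 := congrArg TrivSqZeroExt.snd heps
  rw [DualNumber.eps, TrivSqZeroExt.snd_inr, TrivSqZeroExt.snd_zero] at h1
  exact one_ne_zero h1

/-- Product of a maximal monomial with any other maximal monomial is zero. -/
lemma maximal_mul_maximal [Nonempty X] {l l' : List X}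
    (hl : IsMaximalMonomial P l) (hl' : IsMaximalMonomial P l') :
    RingQuot.mkRingHom (cellRel P) (ncMonomial l) *
      RingQuot.mkRingHom (cellRel P) (ncMonomial l') = 0 := by
  cases l' with
  | nil => exact absurd hl' (not_maximal_nil P)
  | cons x t =>
    have h0 : RingQuot.mkRingHom (cellRel P) (ncMonomial (l ++ [x])) = 0 :=
      hl x l [] (List.append_nil l).symm
    calc RingQuot.mkRingHom (cellRel P) (ncMonomial l) *
          RingQuot.mkRingHom (cellRel P) (ncMonomial (x :: t))
        = RingQuot.mkRingHom (cellRel P) (ncMonomial (l ++ [x])) *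
            RingQuot.mkRingHom (cellRel P) (ncMonomial t) := by
          rw [← map_mul, ← map_mul, ← ncMonomial_append, ← ncMonomial_append]
          congr 1
          simp
      _ = 0 := by rw [h0, zero_mul]

lemma Rtilde_mul_eq_zero [Nonempty X] {a b : RingQuot (cellRel P)}
    (ha : a ∈ Rtilde P) (hb : b ∈ Rtilde P) : a * b = 0 := by
  set S := {r : RingQuot (cellRel P) |
      ∃ l : List X, IsMaximalMonomial P l ∧ r = RingQuot.mkRingHom (cellRel P) (ncMonomial l)}
  have key : ∀ s ∈ S, ∀ t ∈ S, s * t = 0 := by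
    rintro s ⟨l, hl, rfl⟩ t ⟨l', hl', rfl⟩
    exact maximal_mul_maximal P hl hl'
  have step1 : ∀ s ∈ S, s * b = 0 := by
    intro s hs
    have : Rtilde P ≤ LinearMap.ker (LinearMap.mulLeft ℤ s) := by
      rw [Rtilde, Submodule.span_le]
      intro t ht
      exact key s hs t ht
    exact this hb
  have : Rtilde P ≤ LinearMap.ker (LinearMap.mulRight ℤ b) := by
    rw [Rtilde, Submodule.span_le]
    intro s hs
    exact step1 s hs
  exact this ha

end Aux

/-- In `R[C]` (the quotient of `ℤ⟨X⟩` by the ideal generated by monomials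
with a repeated variable or with two variables whose first common ancestor is unmarked,
where `X` is the nonempty set of leaves of the tree `T_C` and `P` encodes "first common
ancestor is unmarked"), the subset `1 + R̃(C)` is closed under multiplication with
`(1 + a)(1 + b) = 1 + (a + b)`; in particular each `1 + a` is a unit, and `1 + R̃(C)` is an
abelian subgroup of the units isomorphic to `(R̃(C), +)`. -/
theorem one_add_Rtilde_is_additive_group
    (X : Type*) [Nonempty X] [Fintype X] (P : X → X → Prop)
    (hP : ∀ u v, P u v → P v u) :
    (∀ a ∈ Rtilde P, ∀ b ∈ Rtilde P,
        ((1 : RingQuot (cellRel P)) + a) * (1 + b) = 1 + (a + b)) ∧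
    (∀ a ∈ Rtilde P, IsUnit ((1 : RingQuot (cellRel P)) + a)) := by
  have hz : ∀ a ∈ Rtilde P, ∀ b ∈ Rtilde P, a * b = (0 : RingQuot (cellRel P)) :=
    fun a ha b hb => Rtilde_mul_eq_zero P ha hb
  have hmul : ∀ a ∈ Rtilde P, ∀ b ∈ Rtilde P,
      ((1 : RingQuot (cellRel P)) + a) * (1 + b) = 1 + (a + b) := by
    intro a ha b hb
    rw [mul_add, mul_one, add_mul, one_mul, hz a ha b hb, add_zero, add_assoc]
  refine ⟨hmul, fun a ha => ?_⟩
  have hna : -a ∈ Rtilde P := neg_mem ha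
  have h1 : ((1 : RingQuot (cellRel P)) + a) * (1 + (-a)) = 1 := by
    rw [hmul a ha (-a) hna, add_neg_cancel, add_zero]
  have h2 : ((1 : RingQuot (cellRel P)) + (-a)) * (1 + a) = 1 := by
    rw [hmul (-a) hna a ha, neg_add_cancel, add_zero]
  exact ⟨⟨1 + a, 1 + (-a), h1, h2⟩, rfl⟩
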